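/- Let B ∈ ℝ^{m×n} and let Z_p ∈ ℝ^{m×k}, Z_u ∈ ℝ^{n×r} be matrices with full column rank. Suppose that for every pressure mode q = Z_p β ≠ 0 there exists a 'supremizer' s(q) in the column span of Z_u with qᵀ B s(q) > 0 and ‖s(q)‖ controlled: specifically, assume X ∈ ℝ^{n×n} is SPD, and for each column p_j of Z_p the supremizer s_j := X^{-1} Bᵀ p_j lies in col(Z_u). Then the reduced inf-sup constant β_red := inf_{β≠0} sup_{α≠0} (βᵀ Z_pᵀ B Z_u α) / (‖Z_u α‖_X ‖Z_p β‖) satisfies β_red ≥ β_full, where β_full := inf over q ∈ col(Z_p), q≠0 of ‖X^{-1/2} Bᵀ q‖ / ‖q‖. -/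

import Mathlib

open Matrix

private lemma dot_self_nonneg {n : ℕ} (v : Fin n → ℝ) : 0 ≤ v ⬝ᵥ v := by
  unfold dotProduct
  exact Finset.sum_nonneg fun i _ => mul_self_nonneg (v i)

open scoped MatrixOrder in
/-- Cauchy–Schwarz for a positive semidefinite real matrix. -/
private lemma cs_psd {n : ℕ} {X : Matrix (Fin n) (Fin n) ℝ} (hX : X.PosSemidef)
    (w u : Fin n → ℝ) :
    w ⬝ᵥ (X *ᵥ u) ≤ Real.sqrt (w ⬝ᵥ (X *ᵥ w)) * Real.sqrt (u ⬝ᵥ (X *ᵥ u)) := by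
  obtain ⟨S, hS⟩ := CStarAlgebra.nonneg_iff_eq_star_mul_self.mp hX.nonneg
  rw [star_eq_conjTranspose] at hS
  subst hS
  have hST : Sᴴ = Sᵀ := by
    ext i j; simp [Matrix.conjTranspose]
  have key : ∀ x y : Fin n → ℝ, x ⬝ᵥ ((Sᴴ * S) *ᵥ y) = (S *ᵥ x) ⬝ᵥ (S *ᵥ y) := by
    intro x y
    rw [hST, ← Matrix.mulVec_mulVec, Matrix.dotProduct_mulVec, Matrix.vecMul_transpose]
  rw [key, key, key]
  set a := S *ᵥ w
  set b := S *ᵥ u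
  calc a ⬝ᵥ b ≤ |a ⬝ᵥ b| := le_abs_self _
    _ = Real.sqrt ((a ⬝ᵥ b) ^ 2) := (Real.sqrt_sq_eq_abs _).symm
    _ ≤ Real.sqrt ((a ⬝ᵥ a) * (b ⬝ᵥ b)) := by
        apply Real.sqrt_le_sqrt
        have := Finset.sum_mul_sq_le_sq_mul_sq Finset.univ a b
        simpa [dotProduct, sq, mul_assoc, mul_comm, mul_left_comm] using this
    _ = Real.sqrt (a ⬝ᵥ a) * Real.sqrt (b ⬝ᵥ b) :=
        Real.sqrt_mul (dot_self_nonneg a) _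

/-- Supremizer enrichment: if the reduced velocity space contains the
supremizers `X⁻¹Bᵀp_j` of all reduced pressure modes, the reduced inf-sup
constant is bounded below by the restricted full-order inf-sup constant. -/
theorem stmt13 {m n k r : ℕ}
    (B : Matrix (Fin m) (Fin n) ℝ)
    (Zp : Matrix (Fin m) (Fin k) ℝ) (hZp : Function.Injective Zp.mulVec)
    (Zu : Matrix (Fin n) (Fin r) ℝ) (hZu : Function.Injective Zu.mulVec)
    (X : Matrix (Fin n) (Fin n) ℝ) (hX : X.PosDef)
    (hsup : ∀ j : Fin k, ∃ α : Fin r → ℝ,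
      Zu *ᵥ α = X⁻¹ *ᵥ (Bᵀ *ᵥ fun i => Zp i j)) :
    (⨅ q : {q : Fin k → ℝ // q ≠ 0},
        Real.sqrt ((Bᵀ *ᵥ (Zp *ᵥ q.1)) ⬝ᵥ (X⁻¹ *ᵥ (Bᵀ *ᵥ (Zp *ᵥ q.1)))) /
          Real.sqrt ((Zp *ᵥ q.1) ⬝ᵥ (Zp *ᵥ q.1)))
      ≤ ⨅ β : {β : Fin k → ℝ // β ≠ 0}, ⨆ α : {α : Fin r → ℝ // α ≠ 0},
          ((Zp *ᵥ β.1) ⬝ᵥ (B *ᵥ (Zu *ᵥ α.1))) /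
            (Real.sqrt ((Zu *ᵥ α.1) ⬝ᵥ (X *ᵥ (Zu *ᵥ α.1))) *
              Real.sqrt ((Zp *ᵥ β.1) ⬝ᵥ (Zp *ᵥ β.1))) := by
  classical
  have hdet : IsUnit X.det := hX.det_pos.ne'.isUnit
  have hXXinv : X * X⁻¹ = 1 := Matrix.mul_nonsing_inv X hdet
  have hXinvPD : (X⁻¹).PosDef := hX.inv
  -- the inf-family is nonnegative, hence bounded below
  have hbdd : BddBelow (Set.range fun q : {q : Fin k → ℝ // q ≠ 0} =>
      Real.sqrt ((Bᵀ *ᵥ (Zp *ᵥ q.1)) ⬝ᵥ (X⁻¹ *ᵥ (Bᵀ *ᵥ (Zp *ᵥ q.1)))) /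
        Real.sqrt ((Zp *ᵥ q.1) ⬝ᵥ (Zp *ᵥ q.1))) := by
    refine ⟨0, ?_⟩
    rintro x ⟨q, rfl⟩
    exact div_nonneg (Real.sqrt_nonneg _) (Real.sqrt_nonneg _)
  rcases isEmpty_or_nonempty {q : Fin k → ℝ // q ≠ 0} with he | hne
  · rw [Real.iInf_of_isEmpty, Real.iInf_of_isEmpty]
  refine le_ciInf fun β => ?_
  set p : Fin m → ℝ := Zp *ᵥ β.1 with hp
  set v : Fin n → ℝ := Bᵀ *ᵥ p with hv
  set w : Fin n → ℝ := X⁻¹ *ᵥ v with hw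
  set C : ℝ := Real.sqrt (v ⬝ᵥ w) / Real.sqrt (p ⬝ᵥ p) with hC
  have hp0 : p ≠ 0 := by
    intro h
    exact β.2 (hZp (by simpa [Matrix.mulVec_zero] using h))
  have hpp : 0 < p ⬝ᵥ p :=
    lt_of_le_of_ne (dot_self_nonneg p) fun h => hp0 (dotProduct_self_eq_zero.mp h.symm)
  have hkey : ∀ x : Fin n → ℝ, p ⬝ᵥ (B *ᵥ x) = v ⬝ᵥ x := by
    intro x
    rw [hv, Matrix.dotProduct_mulVec, Matrix.mulVec_transpose]
  have hwv : X *ᵥ w = v := by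
    rw [hw, Matrix.mulVec_mulVec, hXXinv, Matrix.one_mulVec]
  have hwXw : w ⬝ᵥ (X *ᵥ w) = v ⬝ᵥ w := by
    rw [hwv, dotProduct_comm]
  have huXu : ∀ α : Fin r → ℝ, α ≠ 0 → 0 < (Zu *ᵥ α) ⬝ᵥ (X *ᵥ (Zu *ᵥ α)) := by
    intro α hα
    have hu : Zu *ᵥ α ≠ 0 := by
      intro h
      exact hα (hZu (by simpa [Matrix.mulVec_zero] using h))
    simpa using hX.dotProduct_mulVec_pos hu
  -- every ratio is bounded by C
  have hbound : ∀ α : {α : Fin r → ℝ // α ≠ 0},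
      p ⬝ᵥ (B *ᵥ (Zu *ᵥ α.1)) /
        (Real.sqrt ((Zu *ᵥ α.1) ⬝ᵥ (X *ᵥ (Zu *ᵥ α.1))) * Real.sqrt (p ⬝ᵥ p)) ≤ C := by
    intro α
    set u := Zu *ᵥ α.1 with hu
    have hd : 0 < Real.sqrt (u ⬝ᵥ (X *ᵥ u)) := Real.sqrt_pos.mpr (huXu α.1 α.2)
    have hnum : p ⬝ᵥ (B *ᵥ u) ≤ Real.sqrt (v ⬝ᵥ w) * Real.sqrt (u ⬝ᵥ (X *ᵥ u)) := by
      have hXt : Xᵀ = X := by simpa using hX.isHermitian.eq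
      have hvm : ∀ x : Fin n → ℝ, x ᵥ* X = X *ᵥ x := by
        intro x
        conv_lhs => rw [← hXt]
        rw [Matrix.vecMul_transpose]
      have h1 : p ⬝ᵥ (B *ᵥ u) = w ⬝ᵥ (X *ᵥ u) := by
        rw [hkey, ← hwv, dotProduct_comm, Matrix.dotProduct_mulVec, hvm]
        exact dotProduct_comm _ _
      calc p ⬝ᵥ (B *ᵥ u) = w ⬝ᵥ (X *ᵥ u) := h1
        _ ≤ Real.sqrt (w ⬝ᵥ (X *ᵥ w)) * Real.sqrt (u ⬝ᵥ (X *ᵥ u)) :=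
            cs_psd hX.posSemidef w u
        _ = Real.sqrt (v ⬝ᵥ w) * Real.sqrt (u ⬝ᵥ (X *ᵥ u)) := by rw [hwXw]
    calc p ⬝ᵥ (B *ᵥ u) / (Real.sqrt (u ⬝ᵥ (X *ᵥ u)) * Real.sqrt (p ⬝ᵥ p))
        ≤ Real.sqrt (v ⬝ᵥ w) * Real.sqrt (u ⬝ᵥ (X *ᵥ u)) /
            (Real.sqrt (u ⬝ᵥ (X *ᵥ u)) * Real.sqrt (p ⬝ᵥ p)) := by
          have hden : 0 ≤ Real.sqrt (u ⬝ᵥ (X *ᵥ u)) * Real.sqrt (p ⬝ᵥ p) := by positivity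
          gcongr
        _ = C := by
          rw [hC, mul_comm (Real.sqrt (v ⬝ᵥ w)) _, mul_div_mul_left _ _ hd.ne']
  have hBddAbove : BddAbove (Set.range fun α : {α : Fin r → ℝ // α ≠ 0} =>
      p ⬝ᵥ (B *ᵥ (Zu *ᵥ α.1)) /
        (Real.sqrt ((Zu *ᵥ α.1) ⬝ᵥ (X *ᵥ (Zu *ᵥ α.1))) * Real.sqrt (p ⬝ᵥ p))) := by
    refine ⟨C, ?_⟩
    rintro x ⟨α, rfl⟩
    exact hbound α
  -- step 1: inf ≤ C
  have step1 : (⨅ q : {q : Fin k → ℝ // q ≠ 0},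
      Real.sqrt ((Bᵀ *ᵥ (Zp *ᵥ q.1)) ⬝ᵥ (X⁻¹ *ᵥ (Bᵀ *ᵥ (Zp *ᵥ q.1)))) /
        Real.sqrt ((Zp *ᵥ q.1) ⬝ᵥ (Zp *ᵥ q.1))) ≤ C := by
    exact ciInf_le hbdd β
  refine step1.trans ?_
  -- step 2: C ≤ sup
  by_cases hv0 : v = 0
  · have hC0 : C = 0 := by simp [hC, hv0]
    rw [hC0]
    rcases isEmpty_or_nonempty {α : Fin r → ℝ // α ≠ 0} with he | hne
    · rw [Real.iSup_of_isEmpty]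
    · obtain ⟨α⟩ := hne
      have hval : p ⬝ᵥ (B *ᵥ (Zu *ᵥ α.1)) /
          (Real.sqrt ((Zu *ᵥ α.1) ⬝ᵥ (X *ᵥ (Zu *ᵥ α.1))) * Real.sqrt (p ⬝ᵥ p)) = 0 := by
        rw [hkey, hv0]
        simp
      calc (0:ℝ) = _ := hval.symm
        _ ≤ _ := le_ciSup hBddAbove α
  · -- construct the supremizer coefficient vector
    set α₀ : Fin r → ℝ := ∑ j : Fin k, β.1 j • (hsup j).choose with hα₀def
    have hZua : Zu *ᵥ α₀ = w := by
      have h1 : Zu *ᵥ α₀ = ∑ j : Fin k, β.1 j • (Zu *ᵥ (hsup j).choose) := by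
        rw [hα₀def, ← Matrix.mulVecLin_apply, map_sum]
        simp [Matrix.mulVecLin_apply]
      rw [h1]
      have h2 : ∀ j, Zu *ᵥ (hsup j).choose = X⁻¹ *ᵥ (Bᵀ *ᵥ fun i => Zp i j) :=
        fun j => (hsup j).choose_spec
      simp_rw [h2]
      have h3 : (∑ j : Fin k, β.1 j • (X⁻¹ *ᵥ (Bᵀ *ᵥ fun i => Zp i j)))
          = X⁻¹ *ᵥ (Bᵀ *ᵥ (∑ j : Fin k, β.1 j • (fun i => Zp i j))) := by
        rw [← Matrix.mulVecLin_apply X⁻¹]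
        simp_rw [← Matrix.mulVecLin_apply Bᵀ]
        rw [map_sum, map_sum]
        simp
      rw [h3]
      have h4 : (∑ j : Fin k, β.1 j • (fun i => Zp i j)) = p := by
        funext i
        simp [Matrix.mulVec, dotProduct, Finset.sum_apply, mul_comm, hp]
      rw [h4, ← hv, ← hw]
    have hα₀ : α₀ ≠ 0 := by
      intro h
      apply hv0
      have hw0 : w = 0 := by rw [← hZua, h, Matrix.mulVec_zero]
      rw [← hwv, hw0, Matrix.mulVec_zero]
    have hvw : 0 < v ⬝ᵥ w := by simpa [hw] using hXinvPD.dotProduct_mulVec_pos hv0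
    have hval : p ⬝ᵥ (B *ᵥ (Zu *ᵥ α₀)) /
        (Real.sqrt ((Zu *ᵥ α₀) ⬝ᵥ (X *ᵥ (Zu *ᵥ α₀))) * Real.sqrt (p ⬝ᵥ p)) = C := by
      rw [hZua, hkey, hwXw, hC]
      rw [div_eq_div_iff (by positivity) (Real.sqrt_pos.mpr hpp).ne']
      rw [← mul_assoc, Real.mul_self_sqrt hvw.le]
    calc C = _ := hval.symm
      _ ≤ _ := le_ciSup hBddAbove ⟨α₀, hα₀⟩
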